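/- Fix q ∈ (0,1] with k = qT an integer, and let n samples each be independently assigned to a uniformly random k-subset of T trees. For a uniformly random deleted sample, the ratio of the expected total retraining work E[Σ_{t : sample ∈ S^(t)} |S^(t)|] to the naïve retraining work T·n converges to q² as n → ∞; precisely, E[N_occ]/(T n) = q² + q(1−q)/n ≤ q² + q/n. -/

import Mathlib

/-!
Write `c_t(f)` for the number of samples whose subset `f i` contains the tree `t`. Double counting
turns the total work `∑ᵢ ∑_{t ∈ f i} c_t(f)` into `∑ₜ c_t(f)²`. For uniformly random `f`, each
`c_t` is a sum of `n` independent indicators whose mean is `k / T = q` (all trees look the same),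
so its second moment is `n q + n (n - 1) q²`. Summing over the `T` trees and dividing by `T n²`
gives `q² + q (1 - q) / n`.
-/

open Finset

section Counting

variable {ι β : Type*} [Fintype ι] [Fintype β] [DecidableEq ι] (P : β → Prop) [DecidablePred P]

theorem card_filter_forall_mem_apply (J : Finset ι) :
    #{x : ι → β | ∀ m ∈ J, P (x m)} =
      #{b | P b} ^ #J * Fintype.card β ^ (Fintype.card ι - #J) := by
  have hpi : ({x : ι → β | ∀ m ∈ J, P (x m)} : Finset (ι → β)) =
      Fintype.piFinset fun m => if m ∈ J then ({b | P b} : Finset β) else univ := by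
    ext x
    simp only [mem_filter, mem_univ, true_and, Fintype.mem_piFinset]
    refine forall_congr' fun m => ?_
    split_ifs <;> simp [*]
  rw [hpi, Fintype.card_piFinset, prod_apply_ite, prod_const, prod_const, card_univ,
    filter_mem_eq_inter, univ_inter, filter_not, filter_mem_eq_inter, univ_inter,
    card_univ_sdiff]

variable {R : Type*} [Field R] [CharZero R] [Nonempty β]

theorem card_filter_forall_mem_apply_div (J : Finset ι) :
    (#{x : ι → β | ∀ m ∈ J, P (x m)} : R) / Fintype.card β ^ Fintype.card ι =
      (#{b | P b} / Fintype.card β : R) ^ #J := by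
  have hβ : (Fintype.card β : R) ≠ 0 := by simp
  rw [card_filter_forall_mem_apply, Nat.cast_mul, Nat.cast_pow, Nat.cast_pow,
    ← pow_mul_pow_sub (Fintype.card β : R) (card_le_univ J),
    mul_div_mul_right _ _ (pow_ne_zero _ hβ), div_pow]

theorem sum_card_filter_sq_div :
    (∑ x : ι → β, (#{j | P (x j)} : R) ^ 2) / Fintype.card β ^ Fintype.card ι =
      Fintype.card ι * (#{b | P b} / Fintype.card β : R) +
        Fintype.card ι * (Fintype.card ι - 1) * (#{b | P b} / Fintype.card β : R) ^ 2 := by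
  have hsq (x : ι → β) : (#{j | P (x j)} : R) ^ 2 =
      ∑ j, ∑ l, if ∀ m ∈ ({j, l} : Finset ι), P (x m) then 1 else 0 := by
    simp only [natCast_card_filter, sq, sum_mul_sum, ite_zero_mul_ite_zero, mul_one,
      forall_mem_insert, mem_singleton, forall_eq]
  have hpair (r : R) (j l : ι) :
      r ^ #({j, l} : Finset ι) = r ^ 2 + if j = l then r - r ^ 2 else 0 := by
    rcases eq_or_ne j l with rfl | hjl
    · simp
    · simp [card_pair hjl, hjl]
  simp only [hsq]
  rw [sum_comm, sum_div]
  simp_rw [sum_comm (s := univ (α := ι → β)), sum_boole, sum_div,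
    card_filter_forall_mem_apply_div, hpair, sum_add_distrib, sum_ite_eq, if_pos (mem_univ _),
    sum_const, card_univ, nsmul_eq_mul]
  ring

end Counting

section Incidence

variable {ι α : Type*} [Fintype ι] [Fintype α] [DecidableEq α]

theorem sum_sum_card_filter_mem_eq_sum_sq (s : ι → Finset α) :
    ∑ i, ∑ a ∈ s i, #{j | a ∈ s j} = ∑ a, #{j | a ∈ s j} ^ 2 := by
  rw [sum_comm' (t' := univ) (s' := fun a => {i | a ∈ s i}) (by simp)]
  simp [sq]

theorem card_filter_mem_subtype_card_eq (k : ℕ) (a a' : α) :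
    #{s : {s : Finset α // #s = k} | a ∈ s.1} = #{s : {s : Finset α // #s = k} | a' ∈ s.1} :=
  card_equiv ((Equiv.swap a a').finsetCongr.subtypeEquiv fun s => by simp)
    fun s => by simp [Finset.mem_map_equiv]

theorem card_mul_card_filter_mem_subtype_card (k : ℕ) (a : α) :
    Fintype.card α * #{s : {s : Finset α // #s = k} | a ∈ s.1} =
      k * Fintype.card {s : Finset α // #s = k} := by
  have hdouble : ∑ b, #{s : {s : Finset α // #s = k} | b ∈ s.1} =
      ∑ s : {s : Finset α // #s = k}, #s.1 := by
    simp only [card_filter]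
    rw [sum_comm]
    simp
  simp only [card_filter_mem_subtype_card_eq k _ a, sum_const, card_univ, smul_eq_mul] at hdouble
  rw [hdouble, sum_congr rfl fun s _ => s.2, sum_const, card_univ, smul_eq_mul, mul_comm]

variable {R : Type*} [Field R] [CharZero R] {k : ℕ}

theorem card_filter_mem_subtype_card_div (hk : k ≤ Fintype.card α) (a : α) :
    (#{s : {s : Finset α // #s = k} | a ∈ s.1} : R) / Fintype.card {s : Finset α // #s = k} =
      k / Fintype.card α := by
  have hα : (Fintype.card α : R) ≠ 0 := Nat.cast_ne_zero.mpr (Fintype.card_pos_iff.mpr ⟨a⟩).ne'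
  have hS : (Fintype.card {s : Finset α // #s = k} : R) ≠ 0 := by
    rw [Fintype.card_finset_len]
    exact Nat.cast_ne_zero.mpr (Nat.choose_pos hk).ne'
  rw [div_eq_div_iff hS hα]
  exact_mod_cast (mul_comm _ _).trans (card_mul_card_filter_mem_subtype_card k a)

variable [DecidableEq ι]

theorem sum_card_filter_mem_subtype_card_sq_div (hk : k ≤ Fintype.card α) (a : α) :
    (∑ f : ι → {s : Finset α // #s = k}, (#{j | a ∈ (f j).1} : R) ^ 2) /
        Fintype.card {s : Finset α // #s = k} ^ Fintype.card ι =
      Fintype.card ι * (k / Fintype.card α : R) +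
        Fintype.card ι * (Fintype.card ι - 1) * (k / Fintype.card α : R) ^ 2 := by
  have : Nonempty {s : Finset α // #s = k} :=
    Fintype.card_pos_iff.mp (by rw [Fintype.card_finset_len]; exact Nat.choose_pos hk)
  rw [sum_card_filter_sq_div (fun s : {s : Finset α // #s = k} => a ∈ s.1),
    card_filter_mem_subtype_card_div hk a]

theorem sum_sum_sum_card_filter_mem_subtype_card_div (hk : k ≤ Fintype.card α) :
    (∑ f : ι → {s : Finset α // #s = k}, ∑ i, ∑ a ∈ (f i).1, (#{j | a ∈ (f j).1} : R)) /
        Fintype.card {s : Finset α // #s = k} ^ Fintype.card ι =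
      Fintype.card α * (Fintype.card ι * (k / Fintype.card α : R) +
        Fintype.card ι * (Fintype.card ι - 1) * (k / Fintype.card α : R) ^ 2) := by
  have hdouble (f : ι → {s : Finset α // #s = k}) :
      ∑ i, ∑ a ∈ (f i).1, (#{j | a ∈ (f j).1} : R) = ∑ a, (#{j | a ∈ (f j).1} : R) ^ 2 :=
    mod_cast sum_sum_card_filter_mem_eq_sum_sq fun i => (f i).1
  simp_rw [hdouble]
  rw [sum_comm, sum_div]
  simp only [sum_card_filter_mem_subtype_card_sq_div hk, sum_const, card_univ, nsmul_eq_mul]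

end Incidence

theorem stmt19_general (T k n : ℕ) (hT : 0 < T) (hn : 0 < n) (hkT : k ≤ T)
    (q : ℚ) (hk : (k : ℚ) = q * T) :
    let Ω := (Finset.univ : Finset (Fin n → {s : Finset (Fin T) // s.card = k}))
    let N : (Fin n → {s : Finset (Fin T) // s.card = k}) → Fin n → ℕ :=
      fun f i => ∑ t ∈ (f i : Finset (Fin T)),
        (Finset.univ.filter (fun j : Fin n => t ∈ (f j : Finset (Fin T)))).card
    let E : ℚ := (∑ f ∈ Ω, ∑ i : Fin n, (N f i : ℚ)) / ((Ω.card : ℚ) * n)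
    E / (T * n) = q ^ 2 + q * (1 - q) / n ∧ E / (T * n) ≤ q ^ 2 + q / n := by
  intro Ω N E
  have hq : (k / Fintype.card (Fin T) : ℚ) = q := by
    rw [Fintype.card_fin, hk, mul_div_cancel_right₀ _ (by positivity)]
  have hwork := sum_sum_sum_card_filter_mem_subtype_card_div (ι := Fin n) (R := ℚ)
    (hkT.trans_eq (Fintype.card_fin T).symm)
  rw [hq, Fintype.card_fin, Fintype.card_fin] at hwork
  have hE : E = T * (n * q + n * (n - 1) * q ^ 2) / n := by
    simp only [E, Ω, N, card_univ, Fintype.card_fun, Fintype.card_fin]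
    push_cast
    rw [← div_div, hwork]
  have heq : E / (T * n) = q ^ 2 + q * (1 - q) / n := by
    rw [hE]
    field_simp
    ring
  refine ⟨heq, heq ▸ ?_⟩
  gcongr
  nlinarith [sq_nonneg q]

/-- With k = qT and n samples independently assigned to uniformly random k-subsets of T
trees, the expected retraining work for a uniformly random deleted sample, divided by the
naïve work T·n, equals q² + q(1-q)/n, which is at most q² + q/n. -/
theorem stmt19 (T k n : ℕ) (hT : 0 < T) (hn : 0 < n) (hkT : k ≤ T)
    (q : ℚ) (hq0 : 0 < q) (hq1 : q ≤ 1) (hk : (k : ℚ) = q * T) :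
    let Ω := (Finset.univ : Finset (Fin n → {s : Finset (Fin T) // s.card = k}))
    let N : (Fin n → {s : Finset (Fin T) // s.card = k}) → Fin n → ℕ :=
      fun f i => ∑ t ∈ (f i : Finset (Fin T)),
        (Finset.univ.filter (fun j : Fin n => t ∈ (f j : Finset (Fin T)))).card
    let E : ℚ := (∑ f ∈ Ω, ∑ i : Fin n, (N f i : ℚ)) / ((Ω.card : ℚ) * n)
    E / (T * n) = q ^ 2 + q * (1 - q) / n ∧ E / (T * n) ≤ q ^ 2 + q / n :=
  stmt19_general T k n hT hn hkT q hk
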